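/- Let 0 < δ < π and let P ⊆ ℝ² be a finite nonempty set. Suppose Q ⊆ P is a subset such that for every integer i with 1 ≤ i ≤ ⌈π/δ⌉, Q contains some point of P maximizing p ↦ ⟨u_i, p⟩ over P and some point of P minimizing p ↦ ⟨u_i, p⟩ over P. Then every point p ∈ P satisfies dist(p, conv(Q)) ≤ δ·diam(P), where conv(Q) is the convex hull of Q and dist denotes Euclidean distance from a point to a set. -/

import Mathlib

open Real RealInnerProductSpace

/-- The point of the Euclidean plane with coordinates `(a, b)`. -/
noncomputable def pt (a b : ℝ) : EuclideanSpace ℝ (Fin 2) :=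
  (WithLp.equiv 2 (Fin 2 → ℝ)).symm ![a, b]

/-- The diameter of a finite nonempty point set: `max_{p, q ∈ P} ‖p - q‖`. -/
noncomputable def fdiam (P : Finset (EuclideanSpace ℝ (Fin 2))) (hP : P.Nonempty) : ℝ :=
  (P ×ˢ P).sup' (hP.product hP) (fun pq => dist pq.1 pq.2)

/-!
Let `q₀` be the point of `conv Q` nearest to `p` and `v` the unit vector from `q₀` to `p`. All of
`conv Q` lies in the half-plane `⟪v, · - q₀⟫ ≤ 0`, so `dist p (conv Q) ≤ ⟪v, p - q⟫` for every
`q ∈ Q`. The directions `±uᵢ` are `δ`-dense in angle on the unit circle and a chord is shorter than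
its arc, so some `w = ±uᵢ` has `‖v - w‖ ≤ δ`. The extreme point `q ∈ Q` in direction `w` satisfies
`⟪w, p - q⟫ ≤ 0`, hence `⟪v, p - q⟫ ≤ ‖v - w‖ ‖p - q‖ ≤ δ diam P`.
-/

section InnerProductSpace

variable {E : Type*} [NormedAddCommGroup E] [InnerProductSpace ℝ E]

lemma infDist_convexHull_le_of_forall_inner_le {s : Set E} (hs : s.Finite) {p : E} {ε : ℝ}
    (hε : 0 ≤ ε) (h : ∀ v : E, ‖v‖ = 1 → ∃ q ∈ s, ⟪v, p - q⟫ ≤ ε) :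
    Metric.infDist p (convexHull ℝ s) ≤ ε := by
  rcases (convexHull ℝ s).eq_empty_or_nonempty with hempty | hne
  · rwa [hempty, Metric.infDist_empty]
  obtain ⟨q₀, hq₀, hd⟩ := (hs.isCompact_convexHull ℝ).exists_infDist_eq_dist hne p
  rcases eq_or_ne p q₀ with rfl | hpq
  · rwa [hd, dist_self]
  have hproj : ∀ w ∈ convexHull ℝ s, ⟪p - q₀, w - q₀⟫ ≤ 0 :=
    (norm_eq_iInf_iff_real_inner_le_zero (convex_convexHull ℝ s) hq₀).mp
      (by rw [← dist_eq_norm, ← hd, Metric.infDist_eq_iInf]; simp only [dist_eq_norm])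
  have hnorm : 0 < ‖p - q₀‖ := norm_pos_iff.mpr (sub_ne_zero.mpr hpq)
  set v := ‖p - q₀‖⁻¹ • (p - q₀)
  obtain ⟨q, hq, hvq⟩ := h v (by simp [v, norm_smul, hnorm.ne'])
  have hvq₀ : ⟪v, q - q₀⟫ ≤ 0 := by
    rw [real_inner_smul_left]
    exact mul_nonpos_of_nonneg_of_nonpos (by positivity) (hproj q (subset_convexHull ℝ s hq))
  calc Metric.infDist p (convexHull ℝ s) = ⟪v, p - q₀⟫ := by
        rw [hd, dist_eq_norm, real_inner_smul_left, real_inner_self_eq_norm_sq]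
        field_simp
    _ = ⟪v, p - q⟫ + ⟪v, q - q₀⟫ := by rw [← inner_add_right, sub_add_sub_cancel]
    _ ≤ ε := by linarith

lemma inner_le_norm_sub_mul_of_inner_nonpos {v w x : E} (hw : ⟪w, x⟫ ≤ 0) :
    ⟪v, x⟫ ≤ ‖v - w‖ * ‖x‖ := by
  have := real_inner_le_norm (v - w) x
  rw [inner_sub_left] at this
  linarith

end InnerProductSpace

lemma eq_pt (v : EuclideanSpace ℝ (Fin 2)) : v = pt (v 0) (v 1) := by
  ext i; fin_cases i <;> rfl

lemma inner_pt (a b : ℝ) (x : EuclideanSpace ℝ (Fin 2)) :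
    ⟪pt a b, x⟫ = a * x 0 + b * x 1 := by
  simp [pt, PiLp.inner_apply, Fin.sum_univ_two, mul_comm]

lemma norm_pt_cos_sin (θ : ℝ) : ‖pt (cos θ) (sin θ)‖ = 1 := by
  simp [EuclideanSpace.norm_eq, pt, Fin.sum_univ_two]

lemma pt_cos_sin_sub_pi (θ : ℝ) : pt (cos (θ - π)) (sin (θ - π)) = -pt (cos θ) (sin θ) := by
  ext i; fin_cases i <;> simp [pt]

lemma norm_pt_cos_sin_sub_le (a b : ℝ) :
    ‖pt (cos a) (sin a) - pt (cos b) (sin b)‖ ≤ |a - b| := by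
  have hsq : ‖pt (cos a) (sin a) - pt (cos b) (sin b)‖ ^ 2 = 2 - 2 * cos (a - b) := by
    rw [norm_sub_sq_real, norm_pt_cos_sin, norm_pt_cos_sin, inner_pt, cos_sub]
    simp only [one_pow, pt, WithLp.equiv_symm_apply, Matrix.cons_val_zero, Matrix.cons_val_one]
    ring
  refine (sq_le_sq₀ (norm_nonneg _) (abs_nonneg _)).mp ?_
  rw [sq_abs, hsq]
  linarith [one_sub_sq_div_two_le_cos (x := a - b)]

lemma exists_eq_pt_cos_sin {v : EuclideanSpace ℝ (Fin 2)} (hv : ‖v‖ = 1) :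
    ∃ θ ∈ Set.Ioc (-π) π, v = pt (cos θ) (sin θ) := by
  set z := Complex.orthonormalBasisOneI.repr.symm v
  have hz : ‖z‖ = 1 := by rw [LinearIsometryEquiv.norm_map, hv]
  refine ⟨z.arg, z.arg_mem_Ioc, ?_⟩
  rw [Complex.cos_arg (norm_ne_zero_iff.mp (hz.trans_ne one_ne_zero)), Complex.sin_arg, hz,
    div_one, div_one, eq_pt v]
  simp [z]

lemma exists_nat_abs_sub_mul_le {δ x M : ℝ} (hδ : 0 < δ) (hx : 0 < x) (hxM : x ≤ M) :
    ∃ i : ℕ, 1 ≤ i ∧ i ≤ ⌈M / δ⌉₊ ∧ |x - i * δ| ≤ δ := by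
  refine ⟨⌈x / δ⌉₊, Nat.one_le_ceil_iff.mpr (div_pos hx hδ),
    Nat.ceil_le_ceil (div_le_div_of_nonneg_right hxM hδ.le), abs_sub_le_iff.mpr ⟨?_, ?_⟩⟩
  · have := Nat.le_ceil (x / δ)
    rw [div_le_iff₀ hδ] at this
    linarith
  · have := Nat.ceil_lt_add_one (div_nonneg hx.le hδ.le)
    rw [← sub_lt_iff_lt_add, lt_div_iff₀ hδ] at this
    linarith

lemma dist_le_fdiam {P : Finset (EuclideanSpace ℝ (Fin 2))} (hP : P.Nonempty)
    {a b : EuclideanSpace ℝ (Fin 2)} (ha : a ∈ P) (hb : b ∈ P) : dist a b ≤ fdiam P hP :=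
  Finset.le_sup' (fun pq => dist pq.1 pq.2) (Finset.mem_product.mpr ⟨ha, hb⟩ : (a, b) ∈ P ×ˢ P)

lemma inner_pt_cos_sin_sub_le_mul_fdiam {P : Finset (EuclideanSpace ℝ (Fin 2))}
    (hP : P.Nonempty) {p q : EuclideanSpace ℝ (Fin 2)} (hp : p ∈ P) (hq : q ∈ P) {θ φ δ : ℝ}
    (hq_max : ⟪pt (cos φ) (sin φ), p⟫ ≤ ⟪pt (cos φ) (sin φ), q⟫) (hθφ : |θ - φ| ≤ δ) :
    ⟪pt (cos θ) (sin θ), p - q⟫ ≤ δ * fdiam P hP :=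
  calc ⟪pt (cos θ) (sin θ), p - q⟫
      ≤ ‖pt (cos θ) (sin θ) - pt (cos φ) (sin φ)‖ * ‖p - q‖ :=
        inner_le_norm_sub_mul_of_inner_nonpos (by rw [inner_sub_right]; linarith)
    _ ≤ δ * fdiam P hP :=
        mul_le_mul ((norm_pt_cos_sin_sub_le θ φ).trans hθφ)
          (dist_eq_norm p q ▸ dist_le_fdiam hP hp hq) (norm_nonneg _)
          ((abs_nonneg _).trans hθφ)

theorem extreme_points_hull_general
    (δ : ℝ) (hδ0 : 0 < δ)
    (P Q : Finset (EuclideanSpace ℝ (Fin 2))) (hP : P.Nonempty)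
    (hQP : Q ⊆ P)
    (hmax : ∀ i : ℕ, 1 ≤ i → i ≤ ⌈Real.pi / δ⌉₊ →
      ∃ q ∈ Q, ∀ p ∈ P, ⟪pt (Real.cos (i * δ)) (Real.sin (i * δ)), p⟫ ≤
        ⟪pt (Real.cos (i * δ)) (Real.sin (i * δ)), q⟫)
    (hmin : ∀ i : ℕ, 1 ≤ i → i ≤ ⌈Real.pi / δ⌉₊ →
      ∃ q ∈ Q, ∀ p ∈ P, ⟪pt (Real.cos (i * δ)) (Real.sin (i * δ)), q⟫ ≤
        ⟪pt (Real.cos (i * δ)) (Real.sin (i * δ)), p⟫) :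
    ∀ p ∈ P, Metric.infDist p (convexHull ℝ (Q : Set (EuclideanSpace ℝ (Fin 2)))) ≤
      δ * fdiam P hP := by
  intro p hp
  have hdiam : 0 ≤ fdiam P hP := dist_self p ▸ dist_le_fdiam hP hp hp
  refine infDist_convexHull_le_of_forall_inner_le Q.finite_toSet
    (mul_nonneg hδ0.le hdiam) fun v hv => ?_
  obtain ⟨θ, ⟨hθ_gt, hθ_le⟩, rfl⟩ := exists_eq_pt_cos_sin hv
  rcases lt_or_ge 0 θ with hθ | hθ
  · obtain ⟨i, hi, hin, hiθ⟩ := exists_nat_abs_sub_mul_le hδ0 hθ hθ_le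
    obtain ⟨q, hq, hq_max⟩ := hmax i hi hin
    exact ⟨q, hq, inner_pt_cos_sin_sub_le_mul_fdiam hP hp (hQP hq) (hq_max p hp) hiθ⟩
  · -- Here the direction at angle `θ` is `δ`-close to `-uᵢ`, which is `u` at angle `iδ - π`.
    obtain ⟨i, hi, hin, hiθ⟩ :=
      exists_nat_abs_sub_mul_le hδ0 (by linarith : 0 < θ + π) (by linarith : θ + π ≤ π)
    obtain ⟨q, hq, hq_min⟩ := hmin i hi hin
    refine ⟨q, hq, inner_pt_cos_sin_sub_le_mul_fdiam hP hp (hQP hq) (φ := i * δ - π) ?_ ?_⟩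
    · rw [pt_cos_sin_sub_pi, inner_neg_left, inner_neg_left, neg_le_neg_iff]
      exact hq_min p hp
    · rwa [sub_sub_eq_add_sub]

theorem extreme_points_hull
    (δ : ℝ) (hδ0 : 0 < δ) (hδπ : δ < Real.pi)
    (P Q : Finset (EuclideanSpace ℝ (Fin 2))) (hP : P.Nonempty) (hQ : Q.Nonempty)
    (hQP : Q ⊆ P)
    (hmax : ∀ i : ℕ, 1 ≤ i → i ≤ ⌈Real.pi / δ⌉₊ →
      ∃ q ∈ Q, ∀ p ∈ P, ⟪pt (Real.cos (i * δ)) (Real.sin (i * δ)), p⟫ ≤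
        ⟪pt (Real.cos (i * δ)) (Real.sin (i * δ)), q⟫)
    (hmin : ∀ i : ℕ, 1 ≤ i → i ≤ ⌈Real.pi / δ⌉₊ →
      ∃ q ∈ Q, ∀ p ∈ P, ⟪pt (Real.cos (i * δ)) (Real.sin (i * δ)), q⟫ ≤
        ⟪pt (Real.cos (i * δ)) (Real.sin (i * δ)), p⟫) :
    ∀ p ∈ P, Metric.infDist p (convexHull ℝ (Q : Set (EuclideanSpace ℝ (Fin 2)))) ≤
      δ * fdiam P hP :=
  extreme_points_hull_general δ hδ0 P Q hP hQP hmax hmin
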